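/- Let X = (X⁽¹⁾, X⁽²⁾) be uniformly distributed on (ZMod 2)² and Δ = (Δ⁽¹⁾, Δ⁽²⁾) a (ZMod 2)²-valued random variable independent of X, and set Y = X + Δ. Then the conditional mutual information I[X⁽²⁾ ; Y | X⁽¹⁾] = log 2 − H[Δ⁽²⁾ | Δ⁽¹⁾]. (This identity underlies the rate condition for successive decoding of Z errors given knowledge of X errors on a Pauli channel.) -/

import Mathlib

open MeasureTheory

/-- Shannon entropy (in nats) of a random variable `X` taking values in a finite type,
`H[X] = ∑ s, (-P[X = s]) * log P[X = s]`. -/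
noncomputable def entropy {Ω S : Type*} [MeasurableSpace Ω] [Fintype S]
    (μ : Measure Ω) (X : Ω → S) : ℝ :=
  ∑ s : S, Real.negMulLog (μ (X ⁻¹' {s})).toReal

/-- Conditional Shannon entropy (in nats), `H[X | Z] = H[(X, Z)] - H[Z]` (chain rule). -/
noncomputable def condEntropy {Ω S T : Type*} [MeasurableSpace Ω] [Fintype S] [Fintype T]
    (μ : Measure Ω) (X : Ω → S) (Z : Ω → T) : ℝ :=
  entropy μ (fun ω => (X ω, Z ω)) - entropy μ Z

/-- Conditional mutual information (in nats):
`I[X ; Y | Z] = H[X | Z] + H[Y | Z] - H[(X, Y) | Z]`. -/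
noncomputable def condMutualInfo {Ω S T U : Type*} [MeasurableSpace Ω]
    [Fintype S] [Fintype T] [Fintype U]
    (μ : Measure Ω) (X : Ω → S) (Y : Ω → T) (Z : Ω → U) : ℝ :=
  condEntropy μ X Z + condEntropy μ Y Z - condEntropy μ (fun ω => (X ω, Y ω)) Z

/-!
Expanding the conditional entropies,
`I[X₂ ; Y | X₁] = H[X₂, X₁] + H[Y, X₁] - H[X₁] - H[X₂, Y, X₁]`.
Entropy is invariant under injective relabelling, so `H[X₂, X₁] = H[X]` and
`H[X₂, Y, X₁] = H[X, Δ] = H[X] + H[Δ]`. Likewise `(Y, X₁)` relabels `(Δ₁, (X₁, X₂ + Δ₂))`, and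
since `X₂` is uniform and independent of `(X₁, Δ)`, the law of the latter is
`P[Δ₁ = e] · P[X = a]`, giving `H[Y, X₁] = H[Δ₁] + H[X]`. As `H[X] = log |G₁ × G₂|` and
`H[X₁] = log |G₁|`, what remains is `log |G₂| + H[Δ₁] - H[Δ] = log |G₂| - H[Δ₂ | Δ₁]`.
-/

section Entropy

variable {Ω S T : Type*} [MeasurableSpace Ω] (μ : Measure Ω) [Fintype S]

theorem measure_comp_preimage_singleton [DecidableEq T] {W : Ω → S}
    (hW : ∀ s, MeasurableSet (W ⁻¹' {s})) (f : S → T) (t : T) :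
    μ ((f ∘ W) ⁻¹' {t}) = ∑ s with f s = t, μ (W ⁻¹' {s}) := by
  rw [sum_measure_preimage_singleton _ fun s _ => hW s, Finset.coe_filter]
  congr 1
  ext
  simp

theorem measurableSet_comp_preimage_singleton {W : Ω → S}
    (hW : ∀ s, MeasurableSet (W ⁻¹' {s})) (f : S → T) (t : T) :
    MeasurableSet ((f ∘ W) ⁻¹' {t}) := by
  rw [Set.preimage_comp, ← Set.biUnion_of_singleton (f ⁻¹' {t}), Set.preimage_iUnion₂]
  exact (Set.toFinite _).measurableSet_biUnion fun s _ => hW s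

theorem sum_measure_preimage_singleton_toReal [IsProbabilityMeasure μ] {W : Ω → S}
    (hW : ∀ s, MeasurableSet (W ⁻¹' {s})) :
    ∑ s, (μ (W ⁻¹' {s})).toReal = 1 := by
  rw [← ENNReal.toReal_sum fun s _ => measure_ne_top μ _,
    sum_measure_preimage_singleton _ fun s _ => hW s, Finset.coe_univ, Set.preimage_univ,
    measure_univ, ENNReal.toReal_one]

theorem entropy_comp_of_injective [Fintype T] (W : Ω → S) {f : S → T} (hf : f.Injective) :
    entropy μ (f ∘ W) = entropy μ W := by
  refine (Fintype.sum_of_injective f hf _ _ (fun t ht => ?_) fun s => ?_).symm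
  · have : f ⁻¹' {t} = ∅ := Set.eq_empty_of_forall_notMem fun s hs => ht ⟨s, hs⟩
    rw [Set.preimage_comp, this, Set.preimage_empty, measure_empty, ENNReal.toReal_zero,
      Real.negMulLog_zero]
  · rw [Set.preimage_comp, ← Set.image_singleton, hf.preimage_image]

theorem entropy_eq_log_card_of_uniform {U : Ω → S}
    (hU : ∀ s, μ (U ⁻¹' {s}) = (Nat.card S : ENNReal)⁻¹) :
    entropy μ U = Real.log (Nat.card S) := by
  simp only [entropy, hU, ENNReal.toReal_inv, ENNReal.toReal_natCast, Finset.sum_const,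
    Finset.card_univ, nsmul_eq_mul, Real.negMulLog, Real.log_inv, Nat.card_eq_fintype_card]
  rcases Nat.eq_zero_or_pos (Fintype.card S) with h | h
  · simp [h]
  · field_simp

theorem entropy_eq_add_of_measure_preimage_eq_mul [Fintype T] [IsProbabilityMeasure μ]
    {W : Ω → S × T} {U : Ω → S} {V : Ω → T} (hU : ∀ s, MeasurableSet (U ⁻¹' {s}))
    (hV : ∀ t, MeasurableSet (V ⁻¹' {t}))
    (hW : ∀ s t, μ (W ⁻¹' {(s, t)}) = μ (U ⁻¹' {s}) * μ (V ⁻¹' {t})) :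
    entropy μ W = entropy μ U + entropy μ V := by
  simp only [entropy, Fintype.sum_prod_type, hW, ENNReal.toReal_mul, Real.negMulLog_mul,
    Finset.sum_add_distrib, ← Finset.sum_mul, ← Finset.mul_sum,
    sum_measure_preimage_singleton_toReal μ hU, sum_measure_preimage_singleton_toReal μ hV,
    one_mul]

theorem Set.preimage_pair_singleton {α β γ : Type*} (f : α → β) (g : α → γ) (b : β) (c : γ) :
    (fun x => (f x, g x)) ⁻¹' {(b, c)} = f ⁻¹' {b} ∩ g ⁻¹' {c} := by
  rw [← Set.singleton_prod_singleton, Set.mk_preimage_prod]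

theorem measure_fst_preimage_singleton_of_uniform [DecidableEq S] [Fintype T] [Nonempty T]
    {X : Ω → S × T} (hXm : ∀ a, MeasurableSet (X ⁻¹' {a}))
    (hunif : ∀ a, μ (X ⁻¹' {a}) = (Nat.card (S × T) : ENNReal)⁻¹) (b : S) :
    μ ((Prod.fst ∘ X) ⁻¹' {b}) = (Nat.card S : ENNReal)⁻¹ := by
  rw [measure_comp_preimage_singleton μ hXm, Finset.sum_congr rfl fun a _ => hunif a,
    Finset.sum_const, nsmul_eq_mul]
  have hfiber : (Finset.univ.filter fun a : S × T => a.1 = b) = {b} ×ˢ Finset.univ := by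
    ext ⟨x, y⟩
    simp [eq_comm]
  rw [hfiber, Finset.card_product, Finset.card_singleton, one_mul, Finset.card_univ,
    ← Nat.card_eq_fintype_card, Nat.card_prod, Nat.cast_mul, ENNReal.mul_inv (by simp) (by simp),
    ← mul_assoc, mul_comm, ← mul_assoc, ENNReal.inv_mul_cancel (by simp) (by simp), one_mul]

end Entropy

section AdditiveNoise

variable {Ω G₁ G₂ : Type*} [MeasurableSpace Ω] (μ : Measure Ω)
  [Fintype G₁] [DecidableEq G₁] [AddCommGroup G₂] [Fintype G₂] [DecidableEq G₂]
  {X Δ : Ω → G₁ × G₂} (hXm : ∀ a, MeasurableSet (X ⁻¹' {a}))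
  (hΔm : ∀ d, MeasurableSet (Δ ⁻¹' {d}))
  (hunif : ∀ a, μ (X ⁻¹' {a}) = (Nat.card (G₁ × G₂) : ENNReal)⁻¹)
  (hindep : ∀ a d, μ (X ⁻¹' {a} ∩ Δ ⁻¹' {d}) = μ (X ⁻¹' {a}) * μ (Δ ⁻¹' {d}))
include hXm hΔm hunif hindep

theorem measure_add_noise_fst_prod_preimage_singleton (e : G₁) (a : G₁ × G₂) :
    μ ((fun ω => ((Δ ω).1, ((X ω).1, (X ω).2 + (Δ ω).2))) ⁻¹' {(e, a)})
      = μ ((Prod.fst ∘ Δ) ⁻¹' {e}) * μ (X ⁻¹' {a}) := by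
  have hpairm : ∀ p : (G₁ × G₂) × (G₁ × G₂),
      MeasurableSet ((fun ω => (X ω, Δ ω)) ⁻¹' {p}) := fun ⟨x, d⟩ => by
    rw [Set.preimage_pair_singleton]
    exact (hXm x).inter (hΔm d)
  let f : (G₁ × G₂) × (G₁ × G₂) → G₁ × (G₁ × G₂) := fun p => (p.2.1, (p.1.1, p.1.2 + p.2.2))
  rw [show (fun ω => ((Δ ω).1, ((X ω).1, (X ω).2 + (Δ ω).2))) = f ∘ fun ω => (X ω, Δ ω) from rfl,
    measure_comp_preimage_singleton μ hpairm, measure_comp_preimage_singleton μ hΔm, hunif,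
    Finset.sum_mul]
  refine Finset.sum_nbij' Prod.snd (fun d => ((a.1, a.2 - d.2), d)) ?_ ?_ ?_ ?_ ?_
  · rintro ⟨x, d⟩ h
    simp_all [f]
  · intro d h
    simp_all [f]
  · rintro ⟨x, d⟩ h
    simp only [f, Finset.mem_filter, Finset.mem_univ, true_and, Prod.ext_iff] at h
    obtain ⟨-, h1, h2⟩ := h
    ext <;> simp [h1, ← h2]
  · intro d _
    rfl
  · rintro ⟨x, d⟩ _
    rw [Set.preimage_pair_singleton, hindep, hunif, mul_comm]

theorem entropy_add_noise_fst_prod [IsProbabilityMeasure μ] :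
    entropy μ (fun ω => ((Δ ω).1, ((X ω).1, (X ω).2 + (Δ ω).2)))
      = entropy μ (fun ω => (Δ ω).1) + Real.log (Nat.card (G₁ × G₂)) := by
  rw [entropy_eq_add_of_measure_preimage_eq_mul μ
      (measurableSet_comp_preimage_singleton hΔm Prod.fst) hXm
      (measure_add_noise_fst_prod_preimage_singleton μ hXm hΔm hunif hindep),
    entropy_eq_log_card_of_uniform μ hunif]
  rfl

theorem condMutualInfo_snd_add_noise [IsProbabilityMeasure μ] [AddCommGroup G₁]
    (Y : Ω → G₁ × G₂) (hY : ∀ ω, Y ω = X ω + Δ ω) :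
    condMutualInfo μ (fun ω => (X ω).2) Y (fun ω => (X ω).1)
      = Real.log (Nat.card G₂) - condEntropy μ (fun ω => (Δ ω).2) (fun ω => (Δ ω).1) := by
  obtain rfl : Y = X + Δ := funext hY
  have hX : entropy μ X = Real.log (Nat.card (G₁ × G₂)) :=
    entropy_eq_log_card_of_uniform μ hunif
  have hX₁ : entropy μ (fun ω => (X ω).1) = Real.log (Nat.card G₁) :=
    entropy_eq_log_card_of_uniform μ
      (measure_fst_preimage_singleton_of_uniform μ hXm hunif)
  have hXΔ : entropy μ (fun ω => (X ω, Δ ω)) = entropy μ X + entropy μ Δ :=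
    entropy_eq_add_of_measure_preimage_eq_mul μ hXm hΔm fun a d => by
      rw [Set.preimage_pair_singleton, hindep]
  have hX₂X₁ : entropy μ (fun ω => ((X ω).2, (X ω).1)) = entropy μ X :=
    entropy_comp_of_injective μ X (f := Prod.swap) Prod.swap_injective
  have hYX₁ : entropy μ (fun ω => ((X + Δ) ω, (X ω).1))
      = entropy μ (fun ω => (Δ ω).1) + Real.log (Nat.card (G₁ × G₂)) := by
    rw [← entropy_add_noise_fst_prod μ hXm hΔm hunif hindep]
    refine entropy_comp_of_injective μ (fun ω => ((Δ ω).1, ((X ω).1, (X ω).2 + (Δ ω).2)))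
      (f := fun p => ((p.2.1 + p.1, p.2.2), p.2.1)) ?_
    rintro ⟨e, b, c⟩ ⟨e', b', c'⟩ h
    simp only [Prod.mk.injEq] at h
    obtain ⟨⟨hbe, rfl⟩, rfl⟩ := h
    rw [add_left_cancel hbe]
  have hX₂YX₁ : entropy μ (fun ω => (((X ω).2, (X + Δ) ω), (X ω).1))
      = entropy μ (fun ω => (X ω, Δ ω)) := by
    refine entropy_comp_of_injective μ (fun ω => (X ω, Δ ω))
      (f := fun p => ((p.1.2, p.1 + p.2), p.1.1)) ?_
    rintro ⟨⟨x₁, x₂⟩, d⟩ ⟨⟨x₁', x₂'⟩, d'⟩ h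
    simp only [Prod.mk.injEq] at h
    obtain ⟨⟨rfl, hxd⟩, rfl⟩ := h
    rw [add_left_cancel hxd]
  have hΔ₂Δ₁ : entropy μ (fun ω => ((Δ ω).2, (Δ ω).1)) = entropy μ Δ :=
    entropy_comp_of_injective μ Δ (f := Prod.swap) Prod.swap_injective
  have hcard :
      Real.log (Nat.card (G₁ × G₂)) = Real.log (Nat.card G₁) + Real.log (Nat.card G₂) := by
    rw [Nat.card_prod, Nat.cast_mul, Real.log_mul (by simp) (by simp)]
  simp only [condMutualInfo, condEntropy]
  linarith

end AdditiveNoise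

theorem stmt_16 {Ω : Type*} [MeasurableSpace Ω] (μ : Measure Ω) [IsProbabilityMeasure μ]
    (X Δ : Ω → ZMod 2 × ZMod 2)
    (hXm : ∀ a : ZMod 2 × ZMod 2, MeasurableSet (X ⁻¹' {a}))
    (hΔm : ∀ a : ZMod 2 × ZMod 2, MeasurableSet (Δ ⁻¹' {a}))
    (hunif : ∀ a : ZMod 2 × ZMod 2,
      μ (X ⁻¹' {a}) = (Nat.card (ZMod 2 × ZMod 2) : ENNReal)⁻¹)
    (hindep : ∀ a d : ZMod 2 × ZMod 2,
      μ (X ⁻¹' {a} ∩ Δ ⁻¹' {d}) = μ (X ⁻¹' {a}) * μ (Δ ⁻¹' {d}))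
    (Y : Ω → ZMod 2 × ZMod 2) (hY : ∀ ω, Y ω = X ω + Δ ω) :
    condMutualInfo μ (fun ω => (X ω).2) Y (fun ω => (X ω).1)
      = Real.log 2 - condEntropy μ (fun ω => (Δ ω).2) (fun ω => (Δ ω).1) := by
  have h := condMutualInfo_snd_add_noise μ hXm hΔm hunif hindep Y hY
  rwa [Nat.card_zmod, Nat.cast_ofNat] at h
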